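/- Let G be a connected simple undirected graph on N ≥ 2 vertices with Laplacian L, let τ ≥ 0, b0 > 0, a ≥ b0·λN(L), β_k = b0/(a+k^τ), W(k) = I − β_k·L, and Φ(k,j) = W(k−1)···W(j) for 1 ≤ j < k with Φ(k,k) = I. Let s > 0, S_η = s·I, and let S_v be symmetric positive semidefinite with smallest eigenvalue λ1(S_v). Define σ_i²(k) = (1/k²)·[ ∑_{j=1}^k e_iᵀ Φ(k,j) S_η Φ(k,j)ᵀ e_i + ∑_{j=1}^{k−1} (j·β_j)² · e_iᵀ Φ(k,j+1) S_v Φ(k,j+1)ᵀ e_i ]. Then for every k ≥ 1 and every i: k·σ_i²(k) ≥ s/N + s·(1 − 1/N)·Z_β(k) + (λ1(S_v)/N²)·χ_β(k), where Z_β(k) = (1/k)·∑_{j=1}^k ∏_{t=j}^k (1 − λN(L)·β_t)² and χ_β(k) = (1/k)·∑_{j=1}^{k−1} (j·β_j)². -/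

import Mathlib

/-!
Write `e_i = 𝟙/N + w` with `w ⊥ 𝟙`. Each weight matrix `W(t) = I - β_t L` is symmetric, fixes `𝟙`
and dominates `(1 - λ_N β_t) I ≥ 0`, so the products `Φ(k,j)` fix `𝟙` on both sides and shrink no
vector by more than the factor `∏ (1 - λ_N β_t)`. Hence the `i`-th row of `Φ(k,j)` is the
orthogonal sum of `𝟙/N` and `wᵀ Φ(k,j)`, and its squared norm is at least
`1/N + (1 - 1/N) ∏_{t=j}^{k-1} (1 - λ_N β_t)²`. The diagonal entries in `σ_i²(k)` are quadratic
forms in these rows: with `S_η = s I` this yields the first two terms, and `S_v ≥ λ₁(S_v) I` bounds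
the others by `λ₁(S_v)/N`. Averaging over `j` finishes the proof.
-/

open Filter Matrix

/-- The eigenvalues of a Hermitian real matrix, sorted in increasing order. -/
noncomputable def sortedEigs {N : ℕ} (L : Matrix (Fin N) (Fin N) ℝ) (hL : L.IsHermitian) :
    Fin N → ℝ :=
  hL.eigenvalues ∘ Tuple.sort hL.eigenvalues

namespace Matrix

variable {n : Type*}

lemma posSemidef_one_sub_smul_sub_smul_one [DecidableEq n] {L : Matrix n n ℝ} {lam β : ℝ}
    (hL : (lam • (1 : Matrix n n ℝ) - L).PosSemidef) (hβ : 0 ≤ β) :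
    ((1 - β • L) - (1 - lam * β) • (1 : Matrix n n ℝ)).PosSemidef := by
  have : (1 - β • L) - (1 - lam * β) • (1 : Matrix n n ℝ) = β • (lam • 1 - L) := by
    rw [smul_sub, smul_smul, sub_smul, one_smul, mul_comm]
    abel
  rw [this]
  exact hL.smul hβ

variable [Fintype n]

lemma mul_mul_transpose_apply_self (A B : Matrix n n ℝ) (i : n) :
    (A * B * Aᵀ) i i = A i ⬝ᵥ (B *ᵥ A i) := by
  simp only [mul_apply, dotProduct, mulVec, transpose_apply, Finset.sum_mul, Finset.mul_sum]
  rw [Finset.sum_comm]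
  exact Finset.sum_congr rfl fun _ _ => Finset.sum_congr rfl fun _ _ => by ring

variable [DecidableEq n]

open scoped MatrixOrder in
lemma IsHermitian.posSemidef_smul_one_sub {M : Matrix n n ℝ} (hM : M.IsHermitian) {c : ℝ}
    (h : ∀ i, hM.eigenvalues i ≤ c) : (c • (1 : Matrix n n ℝ) - M).PosSemidef := by
  rw [← le_iff, ← Algebra.algebraMap_eq_smul_one, le_algebraMap_iff_spectrum_le hM.isSelfAdjoint,
    hM.spectrum_real_eq_range_eigenvalues]
  rintro _ ⟨i, rfl⟩
  exact h i

open scoped MatrixOrder in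
lemma IsHermitian.posSemidef_sub_smul_one {M : Matrix n n ℝ} (hM : M.IsHermitian) {c : ℝ}
    (h : ∀ i, c ≤ hM.eigenvalues i) : (M - c • (1 : Matrix n n ℝ)).PosSemidef := by
  rw [← le_iff, ← Algebra.algebraMap_eq_smul_one, algebraMap_le_iff_le_spectrum hM.isSelfAdjoint,
    hM.spectrum_real_eq_range_eigenvalues]
  rintro _ ⟨i, rfl⟩
  exact h i

lemma mul_dotProduct_self_le_dotProduct_mulVec {S : Matrix n n ℝ} {c : ℝ}
    (h : (S - c • (1 : Matrix n n ℝ)).PosSemidef) (v : n → ℝ) :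
    c * (v ⬝ᵥ v) ≤ v ⬝ᵥ (S *ᵥ v) := by
  have := h.dotProduct_mulVec_nonneg v
  simpa only [star_trivial, sub_mulVec, smul_mulVec, one_mulVec, dotProduct_sub,
    dotProduct_smul, smul_eq_mul, sub_nonneg] using this

lemma sq_mul_dotProduct_self_le_mulVec_dotProduct_self {W : Matrix n n ℝ} {c : ℝ} (hc : 0 ≤ c)
    (h : (W - c • (1 : Matrix n n ℝ)).PosSemidef) (y : n → ℝ) :
    c ^ 2 * (y ⬝ᵥ y) ≤ (W *ᵥ y) ⬝ᵥ (W *ᵥ y) := by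
  have hyy : 0 ≤ y ⬝ᵥ y := Finset.sum_nonneg fun i _ => mul_self_nonneg _
  have hlower :=
    pow_le_pow_left₀ (mul_nonneg hc hyy) (mul_dotProduct_self_le_dotProduct_mulVec h y) 2
  have hcs : (y ⬝ᵥ (W *ᵥ y)) ^ 2 ≤ (y ⬝ᵥ y) * ((W *ᵥ y) ⬝ᵥ (W *ᵥ y)) := by
    simpa [dotProduct, sq] using Finset.sum_mul_sq_le_sq_mul_sq Finset.univ y (W *ᵥ y)
  rcases hyy.eq_or_lt with h0 | h0
  · rw [← h0, mul_zero]
    exact Finset.sum_nonneg fun i _ => mul_self_nonneg _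
  · nlinarith

lemma div_sq_le_dotProduct_mulVec {S : Matrix n n ℝ} {lam N π : ℝ} (hlam : 0 ≤ lam) (hN : 1 ≤ N)
    (hπ : 0 ≤ π) (hS : (S - lam • (1 : Matrix n n ℝ)).PosSemidef) {v : n → ℝ}
    (hv : N⁻¹ + (1 - N⁻¹) * π ≤ v ⬝ᵥ v) : lam / N ^ 2 ≤ v ⬝ᵥ (S *ᵥ v) := by
  have hN1 : 0 ≤ 1 - N⁻¹ := sub_nonneg.2 (inv_le_one_of_one_le₀ hN)
  calc lam / N ^ 2 ≤ lam * N⁻¹ := by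
        rw [div_eq_mul_inv]
        gcongr
        exact le_self_pow₀ hN two_ne_zero
    _ ≤ lam * (v ⬝ᵥ v) := by
        gcongr
        exact (le_add_of_nonneg_right (mul_nonneg hN1 hπ)).trans hv
    _ ≤ v ⬝ᵥ (S *ᵥ v) := mul_dotProduct_self_le_dotProduct_mulVec hS v

lemma inv_card_add_mul_le_row_dotProduct_self {P : Matrix n n ℝ} (hP₁ : P *ᵥ 1 = 1)
    (hP₁' : 1 ᵥ* P = 1) {ρ : ℝ} (hρ : ∀ y : n → ℝ, ρ * (y ⬝ᵥ y) ≤ (y ᵥ* P) ⬝ᵥ (y ᵥ* P))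
    (i : n) :
    (Fintype.card n : ℝ)⁻¹ + (1 - (Fintype.card n : ℝ)⁻¹) * ρ ≤ P i ⬝ᵥ P i := by
  have : Nonempty n := ⟨i⟩
  set c : ℝ := (Fintype.card n : ℝ)⁻¹
  have hc : (Fintype.card n : ℝ) * c = 1 := mul_inv_cancel₀ (by simp)
  set u : n → ℝ := c • 1
  set w : n → ℝ := Pi.single i 1 - u
  have hu : u ᵥ* P = u := by rw [smul_vecMul, hP₁']
  have huu : u ⬝ᵥ u = c := by simp [u, dotProduct, mul_comm c, ← mul_assoc, hc]
  have hww : w ⬝ᵥ w = 1 - c := by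
    simp only [w, dotProduct_sub, sub_dotProduct, huu, dotProduct_comm u]
    simp [u]
  have hcross : u ⬝ᵥ (w ᵥ* P) = 0 := by
    rw [dotProduct_comm, ← dotProduct_mulVec, mulVec_smul, hP₁]
    simp [w, u, dotProduct_smul, mul_comm c, hc]
  have hrow : P i = u + w ᵥ* P := by
    rw [← hu, ← add_vecMul, add_sub_cancel]
    exact (single_one_vecMul i P).symm
  calc c + (1 - c) * ρ ≤ u ⬝ᵥ u + (w ᵥ* P) ⬝ᵥ (w ᵥ* P) := by
        rw [huu, ← hww, mul_comm]
        exact add_le_add_right (hρ w) c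
    _ = P i ⬝ᵥ P i := by
        rw [hrow, dotProduct_add, add_dotProduct, add_dotProduct, dotProduct_comm (w ᵥ* P) u,
          hcross]
        ring

end Matrix

section Propagator

variable {n : Type*} [Fintype n] [DecidableEq n] {W P : ℕ → Matrix n n ℝ} {j : ℕ}

lemma mulVec_propagator_eq (hP₀ : P j = 1) (hP : ∀ m, j ≤ m → P (m + 1) = W m * P m)
    {v : n → ℝ} (hv : ∀ m, j ≤ m → W m *ᵥ v = v) {m : ℕ} (hm : j ≤ m) : P m *ᵥ v = v := by
  induction m, hm using Nat.le_induction with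
  | base => rw [hP₀, one_mulVec]
  | succ m hm ih => rw [hP m hm, ← mulVec_mulVec, ih, hv m hm]

lemma vecMul_propagator_eq (hP₀ : P j = 1) (hP : ∀ m, j ≤ m → P (m + 1) = W m * P m)
    {v : n → ℝ} (hv : ∀ m, j ≤ m → v ᵥ* W m = v) {m : ℕ} (hm : j ≤ m) : v ᵥ* P m = v := by
  induction m, hm using Nat.le_induction with
  | base => rw [hP₀, vecMul_one]
  | succ m hm ih => rw [hP m hm, ← vecMul_vecMul, hv m hm, ih]

lemma prod_mul_dotProduct_self_le_vecMul_propagator (hP₀ : P j = 1)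
    (hP : ∀ m, j ≤ m → P (m + 1) = W m * P m) {ρ : ℕ → ℝ} (hρ : ∀ t, j ≤ t → 0 ≤ ρ t)
    (hW : ∀ t, j ≤ t → ∀ y : n → ℝ, ρ t * (y ⬝ᵥ y) ≤ (y ᵥ* W t) ⬝ᵥ (y ᵥ* W t))
    {m : ℕ} (hm : j ≤ m) (y : n → ℝ) :
    (∏ t ∈ Finset.Ico j m, ρ t) * (y ⬝ᵥ y) ≤ (y ᵥ* P m) ⬝ᵥ (y ᵥ* P m) := by
  induction m, hm using Nat.le_induction generalizing y with
  | base => simp [hP₀]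
  | succ m hm ih =>
    have hprod : 0 ≤ ∏ t ∈ Finset.Ico j m, ρ t :=
      Finset.prod_nonneg fun t ht => hρ t (Finset.mem_Ico.1 ht).1
    calc (∏ t ∈ Finset.Ico j (m + 1), ρ t) * (y ⬝ᵥ y)
        = (∏ t ∈ Finset.Ico j m, ρ t) * (ρ m * (y ⬝ᵥ y)) := by
          rw [Finset.prod_Ico_succ_top hm, mul_assoc]
      _ ≤ (∏ t ∈ Finset.Ico j m, ρ t) * ((y ᵥ* W m) ⬝ᵥ (y ᵥ* W m)) :=
          mul_le_mul_of_nonneg_left (hW m hm y) hprod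
      _ ≤ (y ᵥ* P (m + 1)) ⬝ᵥ (y ᵥ* P (m + 1)) := by
          rw [hP m hm, ← vecMul_vecMul]
          exact ih _

lemma inv_card_add_mul_prod_le_propagator_row_dotProduct_self (hP₀ : P j = 1)
    (hP : ∀ m, j ≤ m → P (m + 1) = W m * P m) {c : ℕ → ℝ} (hc : ∀ t, j ≤ t → 0 ≤ c t)
    (hW₁ : ∀ t, j ≤ t → W t *ᵥ 1 = 1)
    (hWc : ∀ t, j ≤ t → (W t - c t • (1 : Matrix n n ℝ)).PosSemidef)
    {m : ℕ} (hm : j ≤ m) (i : n) :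
    (Fintype.card n : ℝ)⁻¹ + (1 - (Fintype.card n : ℝ)⁻¹) * ∏ t ∈ Finset.Ico j m, c t ^ 2 ≤
      P m i ⬝ᵥ P m i := by
  have hsymm : ∀ t, j ≤ t → (W t)ᵀ = W t := fun t ht => by
    simpa using ((hWc t ht).1.add (isHermitian_one.smul (IsSelfAdjoint.all (c t)))).eq
  have hvecMul : ∀ t, j ≤ t → ∀ y : n → ℝ, y ᵥ* W t = W t *ᵥ y := fun t ht y => by
    rw [← mulVec_transpose, hsymm t ht]
  refine inv_card_add_mul_le_row_dotProduct_self (mulVec_propagator_eq hP₀ hP hW₁ hm)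
    (vecMul_propagator_eq hP₀ hP (fun t ht => by rw [hvecMul t ht, hW₁ t ht]) hm)
    (prod_mul_dotProduct_self_le_vecMul_propagator hP₀ hP (fun t _ => sq_nonneg (c t))
      (fun t ht y => ?_) hm) i
  rw [hvecMul t ht]
  exact sq_mul_dotProduct_self_le_mulVec_dotProduct_self (hc t ht) (hWc t ht) y

lemma inv_card_add_mul_prod_le_consensus_propagator_row_dotProduct_self {L : Matrix n n ℝ}
    (hL₁ : L *ᵥ 1 = 0) {lam : ℝ} (hlam : (lam • (1 : Matrix n n ℝ) - L).PosSemidef)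
    {β : ℕ → ℝ} (hβ : ∀ t, j ≤ t → 0 ≤ β t ∧ lam * β t ≤ 1) (hP₀ : P j = 1)
    (hP : ∀ m, j ≤ m → P (m + 1) = (1 - β m • L) * P m) {m : ℕ} (hm : j ≤ m) (i : n) :
    (Fintype.card n : ℝ)⁻¹ + (1 - (Fintype.card n : ℝ)⁻¹) * ∏ t ∈ Finset.Ico j m,
      (1 - lam * β t) ^ 2 ≤ P m i ⬝ᵥ P m i :=
  inv_card_add_mul_prod_le_propagator_row_dotProduct_self hP₀ hP
    (fun t ht => sub_nonneg.2 (hβ t ht).2)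
    (fun t _ => by rw [sub_mulVec, one_mulVec, smul_mulVec, hL₁, smul_zero, sub_zero])
    (fun t ht => posSemidef_one_sub_smul_sub_smul_one hlam (hβ t ht).1) hm i

end Propagator

lemma add_mul_average_le {k : ℕ} (hk : 1 ≤ k) {T : Finset ℕ} {a b d : ℝ} {π x γ y : ℕ → ℝ}
    (hx : ∀ j ∈ Finset.Icc 1 k, a + b * π j ≤ x j) (hy : ∀ j ∈ T, d ≤ y j)
    (hγ : ∀ j ∈ T, 0 ≤ γ j) :
    a + b * ((1 / k) * ∑ j ∈ Finset.Icc 1 k, π j) + d * ((1 / k) * ∑ j ∈ T, γ j) ≤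
      (1 / k) * (∑ j ∈ Finset.Icc 1 k, x j + ∑ j ∈ T, γ j * y j) := by
  have hk0 : (k : ℝ) ≠ 0 := by positivity
  calc a + b * ((1 / k) * ∑ j ∈ Finset.Icc 1 k, π j) + d * ((1 / k) * ∑ j ∈ T, γ j)
      = (1 / k) * (∑ j ∈ Finset.Icc 1 k, (a + b * π j) + ∑ j ∈ T, γ j * d) := by
        rw [Finset.sum_add_distrib, Finset.sum_const, Nat.card_Icc, Nat.add_sub_cancel,
          ← Finset.mul_sum, ← Finset.sum_mul, nsmul_eq_mul]
        field_simp
    _ ≤ (1 / k) * (∑ j ∈ Finset.Icc 1 k, x j + ∑ j ∈ T, γ j * y j) := by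
        gcongr with j hj j hj
        exacts [hx j hj, hγ j hj, hy j hj]

lemma div_add_mul_mul_le {s N π c r : ℝ} (hs : 0 ≤ s) (hN : 1 ≤ N) (hπ : 0 ≤ π) (hc : c ≤ 1)
    (hr : N⁻¹ + (1 - N⁻¹) * π ≤ r) : s / N + s * (1 - 1 / N) * (π * c) ≤ s * r := by
  have hN1 : 0 ≤ 1 - N⁻¹ := sub_nonneg.2 (inv_le_one_of_one_le₀ hN)
  calc s / N + s * (1 - 1 / N) * (π * c) = s * (N⁻¹ + (1 - N⁻¹) * (π * c)) := by ring
    _ ≤ s * (N⁻¹ + (1 - N⁻¹) * π) := by gcongr; exact mul_le_of_le_one_right hπ hc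
    _ ≤ s * r := by gcongr

lemma Tuple.apply_le_comp_sort_last {α : Type*} [LinearOrder α] {N : ℕ} (f : Fin N → α)
    (i : Fin N) (h : N - 1 < N) : f i ≤ (f ∘ Tuple.sort f) ⟨N - 1, h⟩ := by
  simpa using Tuple.monotone_sort f
    (Fin.le_def.2 (Nat.le_pred_of_lt ((Tuple.sort f).symm i).isLt) : _ ≤ (⟨N - 1, h⟩ : Fin N))

lemma Tuple.comp_sort_zero_le_apply {α : Type*} [LinearOrder α] {N : ℕ} (f : Fin N → α)
    (i : Fin N) (h : 0 < N) : (f ∘ Tuple.sort f) ⟨0, h⟩ ≤ f i := by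
  simpa using Tuple.monotone_sort f (Fin.le_def.2 (Nat.zero_le _) : ⟨0, h⟩ ≤ (Tuple.sort f).symm i)

lemma posSemidef_sortedEigs_last_smul_one_sub {N : ℕ} {L : Matrix (Fin N) (Fin N) ℝ}
    (hL : L.IsHermitian) (h : N - 1 < N) :
    (sortedEigs L hL ⟨N - 1, h⟩ • (1 : Matrix (Fin N) (Fin N) ℝ) - L).PosSemidef :=
  hL.posSemidef_smul_one_sub fun i => Tuple.apply_le_comp_sort_last _ i h

lemma posSemidef_sub_sortedEigs_zero_smul_one {N : ℕ} {S : Matrix (Fin N) (Fin N) ℝ}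
    (hS : S.IsHermitian) (h : 0 < N) :
    (S - sortedEigs S hS ⟨0, h⟩ • (1 : Matrix (Fin N) (Fin N) ℝ)).PosSemidef :=
  hS.posSemidef_sub_smul_one fun i => Tuple.comp_sort_zero_le_apply _ i h

lemma step_size_bounds {lam b0 a τ : ℝ} (hlam : 0 ≤ lam) (hb0 : 0 < b0) (ha : b0 * lam ≤ a)
    (hτ : 0 ≤ τ) {t : ℕ} (ht : 1 ≤ t) :
    0 ≤ b0 / (a + (t : ℝ) ^ τ) ∧ lam * (b0 / (a + (t : ℝ) ^ τ)) ≤ 1 := by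
  have hpow : 1 ≤ (t : ℝ) ^ τ := Real.one_le_rpow (by exact_mod_cast ht) hτ
  have hden : 0 < a + (t : ℝ) ^ τ := by nlinarith [mul_nonneg hb0.le hlam]
  refine ⟨div_nonneg hb0.le hden.le, ?_⟩
  rw [mul_div_assoc', div_le_one hden]
  linarith

/-- Pointwise variance lower bound for the consensus+innovations detector with
identical sensors (`S_η = s·I`) and weights `β_k = b0/(a+k^τ)`:
`k·σ_i²(k) ≥ s/N + s(1−1/N)·Z_β(k) + (λ₁(S_v)/N²)·χ_β(k)`. -/
theorem variance_lower_bound (N : ℕ) (hN : 2 ≤ N) (G : SimpleGraph (Fin N))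
    [DecidableRel G.Adj] (τ b0 a : ℝ) (hτ : 0 ≤ τ) (hb0 : 0 < b0)
    (ha : b0 * sortedEigs (G.lapMatrix ℝ)
        (SimpleGraph.posSemidef_lapMatrix ℝ G).1 ⟨N - 1, by omega⟩ ≤ a)
    (s : ℝ) (hs : 0 < s)
    (Sv : Matrix (Fin N) (Fin N) ℝ) (hSv : Sv.PosSemidef)
    (Φ : ℕ → ℕ → Matrix (Fin N) (Fin N) ℝ)
    (hΦdiag : ∀ k : ℕ, Φ k k = 1)
    (hΦrec : ∀ k j : ℕ, 1 ≤ j → j ≤ k →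
      Φ (k + 1) j = (1 - (b0 / (a + (k : ℝ) ^ τ)) • G.lapMatrix ℝ) * Φ k j)
    (σ2 : Fin N → ℕ → ℝ)
    (hσ : ∀ (i : Fin N) (k : ℕ), σ2 i k =
      (1 / (k : ℝ) ^ 2) *
        ((∑ j ∈ Finset.Icc 1 k,
            (Φ k j * (s • (1 : Matrix (Fin N) (Fin N) ℝ)) * (Φ k j)ᵀ) i i) +
          ∑ j ∈ Finset.Icc 1 (k - 1),
            ((j : ℝ) * (b0 / (a + (j : ℝ) ^ τ))) ^ 2 *
              (Φ k (j + 1) * Sv * (Φ k (j + 1))ᵀ) i i)) :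
    ∀ (k : ℕ), 1 ≤ k → ∀ (i : Fin N),
      s / (N : ℝ) +
          s * (1 - 1 / (N : ℝ)) *
            ((1 / (k : ℝ)) * ∑ j ∈ Finset.Icc 1 k,
              ∏ t ∈ Finset.Icc j k,
                (1 - sortedEigs (G.lapMatrix ℝ)
                    (SimpleGraph.posSemidef_lapMatrix ℝ G).1 ⟨N - 1, by omega⟩ *
                  (b0 / (a + (t : ℝ) ^ τ))) ^ 2) +
          (sortedEigs Sv hSv.1 ⟨0, by omega⟩ / (N : ℝ) ^ 2) *
            ((1 / (k : ℝ)) * ∑ j ∈ Finset.Icc 1 (k - 1),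
              ((j : ℝ) * (b0 / (a + (j : ℝ) ^ τ))) ^ 2) ≤
        (k : ℝ) * σ2 i k := by
  intro k hk i
  have hLpsd := SimpleGraph.posSemidef_lapMatrix ℝ G
  set lamN := sortedEigs (G.lapMatrix ℝ) hLpsd.1 ⟨N - 1, by omega⟩
  set β : ℕ → ℝ := fun t => b0 / (a + (t : ℝ) ^ τ)
  have hlamN0 : 0 ≤ lamN := hLpsd.eigenvalues_nonneg _
  have hβ : ∀ t, 1 ≤ t → 0 ≤ β t ∧ lamN * β t ≤ 1 :=
    fun t ht => step_size_bounds hlamN0 hb0 ha hτ ht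
  have hrow : ∀ j, 1 ≤ j → j ≤ k →
      (N : ℝ)⁻¹ + (1 - (N : ℝ)⁻¹) * ∏ t ∈ Finset.Ico j k, (1 - lamN * β t) ^ 2 ≤
        Φ k j i ⬝ᵥ Φ k j i := fun j hj hjk => by
    simpa using inv_card_add_mul_prod_le_consensus_propagator_row_dotProduct_self
      (P := fun m => Φ m j) (by simpa [Pi.one_def] using G.lapMatrix_mulVec_const_eq_zero)
      (posSemidef_sortedEigs_last_smul_one_sub hLpsd.1 _) (fun t ht => hβ t (hj.trans ht))
      (hΦdiag j) (fun m hm => hΦrec m j hj hm) hjk i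
  have hN1 : (1 : ℝ) ≤ N := by norm_cast; omega
  have hprod : ∀ j, 0 ≤ ∏ t ∈ Finset.Ico j k, (1 - lamN * β t) ^ 2 :=
    fun j => Finset.prod_nonneg fun t _ => sq_nonneg _
  rw [hσ, ← mul_assoc (k : ℝ), show (k : ℝ) * (1 / (k : ℝ) ^ 2) = 1 / k by field_simp]
  refine add_mul_average_le hk (fun j hj => ?_) (fun j hj => ?_) (fun j _ => sq_nonneg _)
  · obtain ⟨hj1, hjk⟩ := Finset.mem_Icc.1 hj
    obtain ⟨hβ0, hβ1⟩ := hβ k (hj1.trans hjk)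
    rw [mul_mul_transpose_apply_self, smul_mulVec, one_mulVec, dotProduct_smul, smul_eq_mul,
      ← Finset.prod_Ico_mul_eq_prod_Icc hjk]
    exact div_add_mul_mul_le hs.le hN1 (hprod j) (by nlinarith [mul_nonneg hlamN0 hβ0])
      (hrow j hj1 hjk)
  · obtain ⟨hj1, hjk⟩ : 1 ≤ j + 1 ∧ j + 1 ≤ k := by rw [Finset.mem_Icc] at hj; omega
    rw [mul_mul_transpose_apply_self]
    exact div_sq_le_dotProduct_mulVec (hSv.eigenvalues_nonneg _) hN1 (hprod (j + 1))
      (posSemidef_sub_sortedEigs_zero_smul_one hSv.1 _) (hrow (j + 1) hj1 hjk)
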